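/- arXiv:2503.05137 — 2 statements merged into one kernel-verified Lean document; each statement's English description precedes it below -/
import Mathlib

section
/- Let P be a row-stochastic matrix on a finite set S. The set Σ(P) of stationary distributions of P is a nonempty convex set, and a stationary distribution π ∈ Σ(P) is an extreme point of Σ(P) if and only if the support {i : π(i) > 0} of π is contained in a single closed communicating class of P. -/
/-!
Nonnegative invariant vectors `v = v ᵥ* P` of a stochastic matrix are stable under `v ↦ v⁺` and
`v ↦ |v|`, since a vector dominated by its image, which has the same total mass, equals it; and
positivity of an invariant vector spreads along paths of positive probability. A stationary
distribution exists because `P - 1` is singular: normalize `|w|` for a left null vector `w`.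

If `π` is extreme, its restriction to a closed set `D` is invariant and dominated by `π`, hence a
multiple of `π`; so the support of `π` lies in every closed set it meets, in particular in the set
of states reachable from any of its points, which makes the support a closed communicating class.
Conversely, stationary `σ`, `ρ` supported in one closed class `C` agree: if `σ > ρ` at one state,
then `σ > ρ` on all of `C`, contradicting `∑ σ = ∑ ρ`.
-/

open Filter Topology

/-- A matrix is row-stochastic: nonnegative entries and each row sums to 1. -/
def RowStochastic {S : Type*} [Fintype S] (P : Matrix S S ℝ) : Prop :=
  (∀ i j, 0 ≤ P i j) ∧ ∀ i, ∑ j, P i j = 1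

/-- A probability row vector `π` is a stationary distribution of `P`. -/
def StationaryDist {S : Type*} [Fintype S] (P : Matrix S S ℝ) (π : S → ℝ) : Prop :=
  (∀ i, 0 ≤ π i) ∧ (∑ i, π i = 1) ∧ ∀ j, ∑ i, π i * P i j = π j

/-- A closed communicating class: a nonempty set which no transition leaves, and
within which every state leads to every other in some number `k ≥ 1` of steps. -/
def ClosedClass {S : Type*} [Fintype S] [DecidableEq S] (P : Matrix S S ℝ) (C : Set S) : Prop :=
  C.Nonempty ∧ (∀ i ∈ C, ∀ j, j ∉ C → P i j = 0) ∧
    ∀ i ∈ C, ∀ j ∈ C, ∃ k, 1 ≤ k ∧ 0 < (P ^ k) i j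

open Finset Matrix

section InvariantVector

variable {S : Type*} [Fintype S] [DecidableEq S]

lemma vecMul_pow_eq_self {R : Type*} [Semiring R] {P : Matrix S S R} {v : S → R}
    (hv : v ᵥ* P = v) (k : ℕ) : v ᵥ* P ^ k = v := by
  induction k with
  | zero => simp
  | succ k ih => rw [pow_succ, ← vecMul_vecMul, ih, hv]

variable {R : Type*} [CommRing R] [LinearOrder R] [IsStrictOrderedRing R] {P : Matrix S S R}
  {v : S → R}

lemma sum_vecMul_of_mem_rowStochastic (hP : P ∈ rowStochastic R S) (v : S → R) :
    ∑ j, (v ᵥ* P) j = ∑ i, v i := by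
  rw [← dotProduct_one, ← dotProduct_one, ← dotProduct_mulVec, one_vecMul_of_mem_rowStochastic hP]

lemma vecMul_eq_self_of_le_vecMul (hP : P ∈ rowStochastic R S) (h : v ≤ v ᵥ* P) :
    v ᵥ* P = v :=
  funext fun j => ((sum_eq_sum_iff_of_le fun j _ => h j).1
    (sum_vecMul_of_mem_rowStochastic hP v).symm j (mem_univ j)).symm

lemma vecMul_eq_self_of_vecMul_le (hP : P ∈ rowStochastic R S) (h : v ᵥ* P ≤ v) :
    v ᵥ* P = v :=
  funext fun j => (sum_eq_sum_iff_of_le fun j _ => h j).1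
    (sum_vecMul_of_mem_rowStochastic hP v) j (mem_univ j)

lemma posPart_vecMul_eq_self (hP : P ∈ rowStochastic R S) (hv : v ᵥ* P = v) :
    v⁺ ᵥ* P = v⁺ := by
  refine vecMul_eq_self_of_le_vecMul hP fun j => sup_le ?_ ?_
  · calc v j = (v ᵥ* P) j := by rw [hv]
      _ ≤ (v⁺ ᵥ* P) j := sum_le_sum fun i _ =>
        mul_le_mul_of_nonneg_right (le_posPart (v i)) (nonneg_of_mem_rowStochastic hP)
  · exact nonneg_vecMul_of_mem_rowStochastic hP (fun i => posPart_nonneg (v i)) j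

lemma abs_vecMul_eq_self (hP : P ∈ rowStochastic R S) (hv : v ᵥ* P = v) :
    |v| ᵥ* P = |v| := by
  have hneg : -v ᵥ* P = -v := by rw [neg_vecMul, hv]
  rw [← posPart_add_negPart, add_vecMul, ← posPart_neg, posPart_vecMul_eq_self hP hv,
    posPart_vecMul_eq_self hP hneg]

lemma exists_pos_vecMul_eq_self [Nonempty S] (hP : P ∈ rowStochastic R S) :
    ∃ v : S → R, 0 < v ∧ v ᵥ* P = v := by
  have hdet : (P - 1).det = 0 :=
    exists_mulVec_eq_zero_iff.1 ⟨1, one_ne_zero, by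
      rw [sub_mulVec, one_mulVec, one_vecMul_of_mem_rowStochastic hP, sub_self]⟩
  obtain ⟨w, hw0, hw⟩ := exists_vecMul_eq_zero_iff.2 hdet
  rw [vecMul_sub, vecMul_one, sub_eq_zero] at hw
  obtain ⟨i, hi⟩ := Function.ne_iff.1 hw0
  exact ⟨|w|, Pi.lt_def.2 ⟨abs_nonneg w, i, abs_pos.2 hi⟩, abs_vecMul_eq_self hP hw⟩

lemma pos_of_pow_apply_pos (hP : P ∈ rowStochastic R S) (hv0 : 0 ≤ v) (hv : v ᵥ* P = v)
    {k : ℕ} {i j : S} (hi : 0 < v i) (hk : 0 < (P ^ k) i j) : 0 < v j := by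
  rw [← vecMul_pow_eq_self hv k]
  exact (mul_pos hi hk).trans_le (single_le_sum (f := fun l => v l * (P ^ k) l j) (fun l _ =>
    mul_nonneg (hv0 l) (nonneg_of_mem_rowStochastic (pow_mem hP k))) (mem_univ i))

lemma pow_succ_apply_pos (hP : P ∈ rowStochastic R S) {k : ℕ} {i l j : S}
    (hk : 0 < (P ^ k) i l) (hl : 0 < P l j) : 0 < (P ^ (k + 1)) i j := by
  rw [pow_succ, mul_apply]
  exact (mul_pos hk hl).trans_le (single_le_sum (f := fun m => (P ^ k) i m * P m j) (fun m _ =>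
    mul_nonneg (nonneg_of_mem_rowStochastic (pow_mem hP k)) (nonneg_of_mem_rowStochastic hP))
    (mem_univ l))

lemma indicator_vecMul_eq_self (hP : P ∈ rowStochastic R S) (hv0 : 0 ≤ v) (hv : v ᵥ* P = v)
    {D : Set S} (hD : ∀ i ∈ D, ∀ j ∉ D, P i j = 0) : D.indicator v ᵥ* P = D.indicator v := by
  refine vecMul_eq_self_of_vecMul_le hP fun j => ?_
  by_cases hj : j ∈ D
  · calc (D.indicator v ᵥ* P) j ≤ (v ᵥ* P) j := sum_le_sum fun i _ =>
          mul_le_mul_of_nonneg_right (Set.indicator_le_self' (fun i _ => hv0 i) i)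
            (nonneg_of_mem_rowStochastic hP)
      _ = D.indicator v j := by rw [hv, Set.indicator_of_mem hj]
  · refine (sum_eq_zero fun i _ => ?_).le.trans (Set.indicator_of_notMem hj v).ge
    by_cases hi : i ∈ D
    · simp only [hD i hi j hj, mul_zero]
    · rw [Set.indicator_of_notMem hi, zero_mul]

end InvariantVector

lemma pos_of_mem_openSegment {S R : Type*} [Semiring R] [PartialOrder R] [IsStrictOrderedRing R]
    {x y z : S → R} (hz : 0 ≤ z) (hx : x ∈ openSegment R y z) {i : S} (hi : 0 < y i) :
    0 < x i := by
  obtain ⟨a, b, ha, hb, -, rfl⟩ := hx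
  exact add_pos_of_pos_of_nonneg (mul_pos ha hi) (mul_nonneg hb.le (hz i))

section StationaryDist

variable {S : Type*} [Fintype S] {P : Matrix S S ℝ} {π v : S → ℝ}

lemma stationaryDist_iff : StationaryDist P π ↔ 0 ≤ π ∧ ∑ i, π i = 1 ∧ π ᵥ* P = π :=
  ⟨fun ⟨h0, h1, h⟩ => ⟨h0, h1, funext h⟩, fun ⟨h0, h1, h⟩ => ⟨h0, h1, congrFun h⟩⟩

lemma convex_setOf_stationaryDist (P : Matrix S S ℝ) : Convex ℝ {π | StationaryDist P π} := by
  intro x hx y hy a b ha hb hab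
  rw [Set.mem_ofPred_eq, stationaryDist_iff] at hx hy ⊢
  refine ⟨add_nonneg (smul_nonneg ha hx.1) (smul_nonneg hb hy.1), ?_, ?_⟩
  · simp only [Pi.add_apply, Pi.smul_apply, smul_eq_mul, sum_add_distrib, ← mul_sum, hx.2.1,
      hy.2.1, mul_one, hab]
  · rw [add_vecMul, smul_vecMul, smul_vecMul, hx.2.2, hy.2.2]

lemma stationaryDist_inv_sum_smul (hv0 : 0 ≤ v) (hv : v ᵥ* P = v) (hs : 0 < ∑ i, v i) :
    StationaryDist P ((∑ i, v i)⁻¹ • v) :=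
  stationaryDist_iff.2 ⟨smul_nonneg (inv_nonneg.2 hs.le) hv0,
    by simp only [Pi.smul_apply, smul_eq_mul, ← mul_sum, inv_mul_cancel₀ hs.ne'],
    by rw [smul_vecMul, hv]⟩

lemma exists_stationaryDist [DecidableEq S] [Nonempty S] (hP : P ∈ rowStochastic ℝ S) :
    ∃ π, StationaryDist P π :=
  let ⟨v, hv0, hv⟩ := exists_pos_vecMul_eq_self hP
  ⟨(∑ i, v i)⁻¹ • v, stationaryDist_inv_sum_smul hv0.le hv (Fintype.sum_pos hv0)⟩

lemma eq_sum_smul_of_mem_extremePoints (hπ : π ∈ Set.extremePoints ℝ {π | StationaryDist P π})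
    (hv0 : 0 ≤ v) (hv : v ᵥ* P = v) (hvπ : v ≤ π) : v = (∑ i, v i) • π := by
  rw [mem_extremePoints] at hπ
  obtain ⟨hπ0, hπ1, hπP⟩ := stationaryDist_iff.1 hπ.1
  set s := ∑ i, v i
  have hw0 : 0 ≤ π - v := sub_nonneg.2 hvπ
  have hw : (π - v) ᵥ* P = π - v := by rw [sub_vecMul, hπP, hv]
  have hws : ∑ i, (π - v) i = 1 - s := by simp only [Pi.sub_apply, sum_sub_distrib, hπ1, s]
  rcases (Fintype.sum_nonneg hv0).eq_or_lt with hs0 | hs0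
  · rw [show s = 0 from hs0.symm, zero_smul]
    exact (Fintype.sum_eq_zero_iff_of_nonneg hv0).1 hs0.symm
  rcases (hws ▸ Fintype.sum_nonneg hw0 : 0 ≤ 1 - s).eq_or_lt with hs1 | hs1
  · have hw_zero := (Fintype.sum_eq_zero_iff_of_nonneg hw0).1 (hws.trans hs1.symm)
    rw [show s = 1 by linarith, one_smul]
    exact (sub_eq_zero.1 hw_zero).symm
  have hseg : π ∈ openSegment ℝ (s⁻¹ • v) ((1 - s)⁻¹ • (π - v)) :=
    ⟨s, 1 - s, hs0, hs1, by ring, by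
      rw [smul_inv_smul₀ hs0.ne', smul_inv_smul₀ hs1.ne', add_sub_cancel]⟩
  have hv_eq := (hπ.2 _ (stationaryDist_inv_sum_smul hv0 hv hs0) _
    (hws ▸ stationaryDist_inv_sum_smul hw0 hw (hws ▸ hs1)) hseg).1
  rw [← hv_eq, smul_inv_smul₀ hs0.ne']

lemma mem_of_pos_of_mem_extremePoints [DecidableEq S] (hP : P ∈ rowStochastic ℝ S)
    (hπ : π ∈ Set.extremePoints ℝ {π | StationaryDist P π}) {D : Set S}
    (hD : ∀ i ∈ D, ∀ j ∉ D, P i j = 0) {i j : S} (hiD : i ∈ D) (hi : 0 < π i) (hj : 0 < π j) :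
    j ∈ D := by
  obtain ⟨hπ0, -, hπP⟩ := stationaryDist_iff.1 hπ.1
  have hπD := eq_sum_smul_of_mem_extremePoints hπ (Set.indicator_nonneg (fun i _ => hπ0 i))
    (indicator_vecMul_eq_self hP hπ0 hπP hD) (Set.indicator_le_self' fun i _ => hπ0 i)
  have hs : 0 < ∑ k, D.indicator π k :=
    (Set.indicator_of_mem hiD π ▸ hi).trans_le
      (single_le_sum (fun k _ => Set.indicator_nonneg (fun k _ => hπ0 k) k) (mem_univ i))
  by_contra hjD
  have hπDj := congrFun hπD j
  rw [Set.indicator_of_notMem hjD, Pi.smul_apply, smul_eq_mul] at hπDj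
  exact (mul_pos hs hj).ne hπDj

lemma closedClass_setOf_pos_of_mem_extremePoints [DecidableEq S] (hP : P ∈ rowStochastic ℝ S)
    (hπ : π ∈ Set.extremePoints ℝ {π | StationaryDist P π}) : ClosedClass P {i | 0 < π i} := by
  obtain ⟨hπ0, hπ1, hπP⟩ := stationaryDist_iff.1 hπ.1
  have hpos {k : ℕ} {i j : S} : 0 < π i → 0 < (P ^ k) i j → 0 < π j :=
    pos_of_pow_apply_pos hP hπ0 hπP
  refine ⟨?_, fun i hi j hj => ?_, fun i hi j hj => ?_⟩
  · obtain ⟨i, -, hi⟩ := exists_lt_of_sum_lt (f := fun _ => 0) (g := π) (s := univ)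
      (by rw [sum_const_zero, hπ1]; exact one_pos)
    exact ⟨i, hi⟩
  · by_contra hij
    exact hj (hpos (k := 1) hi (by
      rw [pow_one]; exact (nonneg_of_mem_rowStochastic hP).lt_of_ne' hij))
  · set D := {l | ∃ k, 1 ≤ k ∧ 0 < (P ^ k) i l}
    have hD : ∀ l ∈ D, ∀ m ∉ D, P l m = 0 := fun l ⟨k, _, hk⟩ m hm =>
      ((nonneg_of_mem_rowStochastic hP).eq_or_lt.resolve_right fun hlm =>
        hm ⟨k + 1, by omega, pow_succ_apply_pos hP hk hlm⟩).symm
    obtain ⟨l, -, hl⟩ := exists_lt_of_sum_lt (f := 0) (g := P i) (s := univ)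
      (by simp [sum_row_of_mem_rowStochastic hP i])
    have hl' : 0 < (P ^ 1) i l := by rwa [pow_one]
    exact mem_of_pos_of_mem_extremePoints hP hπ hD ⟨1, le_rfl, hl'⟩ (hpos hi hl') hj

variable [DecidableEq S] {C : Set S}

lemma ClosedClass.lt_of_lt (hC : ClosedClass P C) (hP : P ∈ rowStochastic ℝ S)
    {σ ρ : S → ℝ} (hσ : σ ᵥ* P = σ) (hρ : ρ ᵥ* P = ρ) {j m : S} (hj : j ∈ C) (hm : m ∈ C)
    (hlt : ρ j < σ j) : ρ m < σ m := by
  -- `(σ - ρ)⁺` is invariant, and positivity of invariant vectors spreads along paths.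
  have hτ : (σ - ρ) ᵥ* P = σ - ρ := by rw [sub_vecMul, hσ, hρ]
  obtain ⟨k, -, hk⟩ := hC.2.2 j hj m hm
  have hpos := pos_of_pow_apply_pos hP (posPart_nonneg _) (posPart_vecMul_eq_self hP hτ)
    (by simpa [Pi.posPart_apply, posPart_pos_iff] using hlt) hk
  simpa [Pi.posPart_apply, posPart_pos_iff] using hpos

lemma StationaryDist.eq_of_closedClass (hC : ClosedClass P C) (hP : P ∈ rowStochastic ℝ S)
    {σ ρ : S → ℝ} (hσ : StationaryDist P σ) (hρ : StationaryDist P ρ)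
    (hσC : ∀ i, 0 < σ i → i ∈ C) (hρC : ∀ i, 0 < ρ i → i ∈ C) : σ = ρ := by
  obtain ⟨hσ0, hσ1, hσP⟩ := stationaryDist_iff.1 hσ
  obtain ⟨hρ0, hρ1, hρP⟩ := stationaryDist_iff.1 hρ
  have hle : σ ≤ ρ := by
    intro j
    by_contra! hj
    have hρσ (m : S) : ρ m ≤ σ m := by
      by_cases hm : m ∈ C
      · exact (hC.lt_of_lt hP hσP hρP (hσC j ((hρ0 j).trans_lt hj)) hm hj).le
      · exact (not_lt.1 (mt (hρC m) hm)).trans (hσ0 m)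
    exact (sum_lt_sum (fun m _ => hρσ m) ⟨j, mem_univ j, hj⟩).ne (hρ1.trans hσ1.symm)
  exact funext fun j => (sum_eq_sum_iff_of_le fun j _ => hle j).1 (hσ1.trans hρ1.symm) j
    (mem_univ j)

end StationaryDist

/-- The set of stationary distributions of a row-stochastic matrix is a nonempty
convex set, and a stationary distribution is an extreme point of this set iff its
support is contained in a single closed communicating class. -/
theorem stationary_polytope_extreme_points
    {S : Type*} [Fintype S] [DecidableEq S] [Nonempty S]
    (P : Matrix S S ℝ) (hP : RowStochastic P) :
    ({π : S → ℝ | StationaryDist P π}).Nonempty ∧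
    Convex ℝ {π : S → ℝ | StationaryDist P π} ∧
    ∀ π : S → ℝ, StationaryDist P π →
      (π ∈ Set.extremePoints ℝ {π' : S → ℝ | StationaryDist P π'} ↔
        ∃ C : Set S, ClosedClass P C ∧ ∀ i, 0 < π i → i ∈ C) := by
  have hP' : P ∈ rowStochastic ℝ S := mem_rowStochastic_iff_sum.2 hP
  refine ⟨exists_stationaryDist hP', convex_setOf_stationaryDist P, fun π hπ => ⟨fun hext =>
    ⟨_, closedClass_setOf_pos_of_mem_extremePoints hP' hext, fun _ => id⟩, ?_⟩⟩
  rintro ⟨C, hC, hπC⟩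
  refine mem_extremePoints.2 ⟨hπ, fun y hy z hz hyz => ⟨?_, ?_⟩⟩
  · exact hy.eq_of_closedClass hC hP' hπ
      (fun i hi => hπC i (pos_of_mem_openSegment hz.1 hyz hi)) hπC
  · exact hz.eq_of_closedClass hC hP' hπ
      (fun i hi => hπC i (pos_of_mem_openSegment hy.1 ((openSegment_symm ℝ y z) ▸ hyz) hi)) hπC
end

section
/- Let G = (S, E) be a finite directed graph in which every vertex i has out-degree d_i ≥ 1, and let P be the simple-random-walk matrix: P(i,j) = 1/d_i if (i,j) ∈ E and P(i,j) = 0 otherwise. Assume P is irreducible and let π be its unique stationary distribution. Then: (a) every arborescence a rooted at i all of whose edges lie in E (i.e., (j, a(j)) ∈ E for all j ≠ i) has weight |a|_P = ∏_{j≠i} 1/d_j; and (b) for every i ∈ S, π(i) = d_i · N_i / Σ_{j∈S} d_j · N_j, where N_i denotes the number of arborescences rooted at i all of whose edges lie in E. In particular, π(i) is proportional to the product of the out-degree of i and the number of arborescences of G rooted at i. -/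
open Filter Topology

/-- Irreducibility: any state leads to any other in some number `k ≥ 1` of steps. -/
def MatIrreducible {S : Type*} [Fintype S] [DecidableEq S] (P : Matrix S S ℝ) : Prop :=
  ∀ i j, ∃ k, 1 ≤ k ∧ 0 < (P ^ k) i j

/-- An arborescence rooted at `root`, encoded as a map `f : S → S` fixing the root
(so that the partial map on `S \ {root}` is pinned down) such that iterates of `f`
from every state reach the root. -/
def IsArb {S : Type*} (root : S) (f : S → S) : Prop :=
  f root = root ∧ ∀ j, ∃ k, f^[k] j = root

/-- The weight of an arborescence with respect to a matrix `R`: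
the product of the weights of its edges `(j, f j)`, `j ≠ root`. -/
def arbWeight {S : Type*} [Fintype S] [DecidableEq S]
    (R : Matrix S S ℝ) (root : S) (f : S → S) : ℝ :=
  ∏ j ∈ Finset.univ.erase root, R j (f j)

/-!
`d j · N j` counts the maps `f : S → S` with all edges in `E` whose functional graph is a single
cycle through `j` with trees hanging off it: an arborescence rooted at `j` plus an out-edge of `j`.
Cutting the cycle just before `j` instead, at the predecessor `i` of `j`, leaves an arborescence
rooted at `i` with `(i, j) ∈ E`, and this is a bijection. Hence `∑_{(i,j) ∈ E} N i = d j · N j`,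
i.e. `μ i := d i · N i` is invariant for the simple random walk. Irreducibility makes `μ` positive,
and a nonnegative invariant vector vanishing at one vertex vanishes everywhere; subtracting from
`π` the largest multiple of `μ` below it shows that `π` is proportional to `μ`.
-/

open Finset Function

section Iterates

variable {S : Type*}

def LeadsTo (f : S → S) (r : S) : Prop := ∀ j, ∃ k, f^[k] j = r

theorem LeadsTo.of_eq_of_ne {f g : S → S} {r : S} (h : LeadsTo f r)
    (hfg : ∀ x, x ≠ r → f x = g x) : LeadsTo g r := by
  intro k
  obtain ⟨m, hm⟩ := h k
  induction m generalizing k with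
  | zero => exact ⟨0, hm⟩
  | succ m ih =>
    by_cases hk : k = r
    · exact ⟨0, hk⟩
    · rw [iterate_succ_apply, hfg k hk] at hm
      obtain ⟨n, hn⟩ := ih (g k) hm
      exact ⟨n + 1, hn⟩

theorem LeadsTo.of_iterate_eq {f : S → S} {r s : S} (h : LeadsTo f r) {m : ℕ}
    (hm : f^[m] r = s) : LeadsTo f s := fun k =>
  let ⟨n, hn⟩ := h k
  ⟨m + n, by rw [iterate_add_apply, hn, hm]⟩

theorem leadsTo_of_lt {f : S → S} {r : S} (R : S → ℕ) (hR : ∀ x, x ≠ r → R (f x) < R x) :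
    LeadsTo f r := by
  intro x
  induction h : R x using Nat.strong_induction_on generalizing x with
  | _ n ih =>
    by_cases hx : x = r
    · exact ⟨0, hx⟩
    · obtain ⟨k, hk⟩ := ih _ (h ▸ hR x hx) (f x) rfl
      exact ⟨k + 1, hk⟩

theorem Function.IsPeriodicPt.exists_iterate_lt_eq {f : S → S} {n : ℕ} {x y : S}
    (hp : IsPeriodicPt f n x) (hn : 0 < n) {k : ℕ} (hk : f^[k] x = y) :
    ∃ t < n, f^[t] x = y :=
  ⟨k % n, Nat.mod_lt k hn, by rw [hp.iterate_mod_apply, hk]⟩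

theorem IsArb.leadsTo {r : S} {f : S → S} (h : IsArb r f) : LeadsTo f r := h.2

theorem IsArb.eq_root_of_update [DecidableEq S] {i j v : S} {a : S → S} (ha : IsArb i a)
    (hv : update a i j v = j) (hreach : ∃ m, (update a i j)^[m] j = v) : v = i := by
  -- The `f`-orbit of `j` follows the `a`-path from `j` to `i` and then returns to `j`; an earlier
  -- return to `j` would put `j` on an `a`-cycle avoiding the root.
  set f := update a i j
  have hfi : f i = j := update_self i j a
  have hf : ∀ x, x ≠ i → f x = a x := fun x hx => update_of_ne hx j a
  set n := Nat.find (ha.2 j)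
  have hn : a^[n] j = i := Nat.find_spec (ha.2 j)
  have hne : ∀ t < n, a^[t] j ≠ i := fun t ht => Nat.find_min (ha.2 j) ht
  have hagree : ∀ t ≤ n, f^[t] j = a^[t] j := by
    intro t ht
    induction t with
    | zero => rfl
    | succ t ih =>
      rw [iterate_succ_apply', iterate_succ_apply', ih (by omega), hf _ (hne t (by omega))]
  have hper : IsPeriodicPt f (n + 1) j := by
    change f^[n + 1] j = j
    rw [iterate_succ_apply', hagree n le_rfl, hn, hfi]
  obtain ⟨m, hm⟩ := hreach
  obtain ⟨t, ht, rfl⟩ := hper.exists_iterate_lt_eq n.succ_pos hm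
  rw [hagree t (by omega)] at hv ⊢
  rcases Nat.lt_succ_iff_lt_or_eq.mp ht with htn | rfl
  · have hcycle : IsPeriodicPt a (t + 1) j := by
      change a^[t + 1] j = j
      rwa [iterate_succ_apply', ← hf _ (hne t htn)]
    obtain ⟨t', ht', hi⟩ := hcycle.exists_iterate_lt_eq t.succ_pos hn
    exact absurd hi (hne t' (by omega))
  · exact hn

theorem update_update_root [DecidableEq S] {r k : S} {a : S → S} (ha : a r = r) :
    update (update a r k) r r = a := by
  rw [update_idem]
  simpa only [ha] using update_eq_self r a

end Iterates

section Arborescences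

variable {S : Type*} [Fintype S] [DecidableEq S] {E : Finset (S × S)}

open Classical in
noncomputable def edgeArbs (E : Finset (S × S)) (r : S) : Finset (S → S) :=
  univ.filter fun f => IsArb r f ∧ ∀ j ∈ univ.erase r, (j, f j) ∈ E

open Classical in
/-- `LeadsTo f r` makes the functional graph of `f` connected, with `r` on its unique cycle. -/
noncomputable def unicyclicMaps (E : Finset (S × S)) (r : S) : Finset (S → S) :=
  univ.filter fun f => (∀ k, (k, f k) ∈ E) ∧ LeadsTo f r

theorem mem_edgeArbs {r : S} {f : S → S} :
    f ∈ edgeArbs E r ↔ IsArb r f ∧ ∀ j, j ≠ r → (j, f j) ∈ E := by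
  simp [edgeArbs]

theorem mem_unicyclicMaps {r : S} {f : S → S} :
    f ∈ unicyclicMaps E r ↔ (∀ k, (k, f k) ∈ E) ∧ LeadsTo f r := by
  simp [unicyclicMaps]

theorem update_mem_unicyclicMaps {r k : S} {a : S → S} (ha : a ∈ edgeArbs E r)
    (hk : (r, k) ∈ E) : update a r k ∈ unicyclicMaps E r := by
  obtain ⟨harb, hE⟩ := mem_edgeArbs.mp ha
  refine mem_unicyclicMaps.mpr ⟨fun v => ?_, harb.leadsTo.of_eq_of_ne fun x hx => ?_⟩
  · by_cases hv : v = r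
    · subst hv; rwa [update_self]
    · rw [update_of_ne hv]; exact hE v hv
  · exact (update_of_ne hx k a).symm

theorem update_self_mem_edgeArbs {r : S} {f : S → S} (hf : f ∈ unicyclicMaps E r) :
    update f r r ∈ edgeArbs E r := by
  obtain ⟨hE, hlead⟩ := mem_unicyclicMaps.mp hf
  refine mem_edgeArbs.mpr ⟨⟨update_self r r f, hlead.of_eq_of_ne fun x hx => ?_⟩, fun v hv => ?_⟩
  · exact (update_of_ne hx r f).symm
  · rw [update_of_ne hv]; exact hE v

theorem mem_unicyclicMaps_of_iterate_eq {r s : S} {f : S → S} (hf : f ∈ unicyclicMaps E r)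
    {m : ℕ} (hm : f^[m] r = s) : f ∈ unicyclicMaps E s := by
  obtain ⟨hE, hlead⟩ := mem_unicyclicMaps.mp hf
  exact mem_unicyclicMaps.mpr ⟨hE, hlead.of_iterate_eq hm⟩

theorem card_unicyclicMaps (r : S) :
    #(unicyclicMaps E r) = #(univ.filter fun k => (r, k) ∈ E) * #(edgeArbs E r) := by
  rw [← card_product]
  refine card_nbij' (fun f => (f r, update f r r)) (fun p => update p.2 r p.1) ?_ ?_ ?_ ?_
  · intro f hf
    rw [mem_coe, mem_product, mem_filter]
    exact ⟨⟨mem_univ _, (mem_unicyclicMaps.mp hf).1 r⟩, update_self_mem_edgeArbs hf⟩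
  · rintro ⟨k, a⟩ hp
    rw [mem_coe, mem_product, mem_filter] at hp
    exact update_mem_unicyclicMaps hp.2 hp.1.2
  · intro f _
    simp only [update_idem, update_eq_self]
  · rintro ⟨k, a⟩ hp
    simp only [mem_coe, mem_product] at hp
    simp only [update_self, update_update_root (mem_edgeArbs.mp hp.2).1.1]

theorem sum_card_edgeArbs_eq_card_unicyclicMaps (j : S) :
    ∑ i ∈ univ.filter (fun i => (i, j) ∈ E), #(edgeArbs E i) = #(unicyclicMaps E j) := by
  rw [← card_sigma]
  refine card_bij (fun p _ => update p.2 p.1 j) ?_ ?_ ?_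
  · rintro ⟨i, a⟩ hp
    simp only [mem_sigma, mem_filter, mem_univ, true_and] at hp
    exact mem_unicyclicMaps_of_iterate_eq (m := 1) (update_mem_unicyclicMaps hp.2 hp.1)
      (by rw [iterate_one, update_self])
  · rintro ⟨i, a⟩ hp ⟨i', a'⟩ hp' (heq : update a i j = update a' i' j)
    simp only [mem_sigma, mem_filter, mem_univ, true_and] at hp hp'
    have ha := (mem_edgeArbs.mp hp.2).1
    have ha' := (mem_edgeArbs.mp hp'.2).1
    obtain rfl : i = i' := by
      refine ha'.eq_root_of_update (v := i) (by rw [← heq, update_self]) ?_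
      rw [← heq]
      exact (mem_unicyclicMaps.mp (update_mem_unicyclicMaps hp.2 hp.1)).2 j
    rw [← update_update_root ha.1 (k := j), heq, update_update_root ha'.1]
  · intro f hf
    obtain ⟨m, hm⟩ := (mem_unicyclicMaps.mp hf).2 (f j)
    set i := f^[m] j
    have hfi : f i = j := by rw [← iterate_succ_apply' f m j, iterate_succ_apply, hm]
    have hfi' : f ∈ unicyclicMaps E i := mem_unicyclicMaps_of_iterate_eq hf rfl
    refine ⟨⟨i, update f i i⟩, ?_, ?_⟩
    · simp only [mem_sigma, mem_filter, mem_univ, true_and]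
      exact ⟨hfi ▸ (mem_unicyclicMaps.mp hf).1 i, update_self_mem_edgeArbs hfi'⟩
    · simp only [update_idem, ← hfi, update_eq_self]

theorem sum_card_edgeArbs_eq (j : S) :
    ∑ i ∈ univ.filter (fun i => (i, j) ∈ E), #(edgeArbs E i) =
      #(univ.filter fun k => (j, k) ∈ E) * #(edgeArbs E j) := by
  rw [sum_card_edgeArbs_eq_card_unicyclicMaps, card_unicyclicMaps]

end Arborescences

section Markov

open scoped Matrix

variable {S : Type*} [Fintype S] {P : Matrix S S ℝ}

theorem StationaryDist.vecMul_eq_self {π : S → ℝ} (h : StationaryDist P π) : π ᵥ* P = π :=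
  funext fun j => (Matrix.vecMul_apply_eq_sum π P j).trans (h.2.2 j)

variable [DecidableEq S]

theorem vecMul_pow_eq_self_s14 {x : S → ℝ} (hx : x ᵥ* P = x) (k : ℕ) : x ᵥ* P ^ k = x := by
  induction k with
  | zero => rw [pow_zero, Matrix.vecMul_one]
  | succ k ih => rw [pow_succ, ← Matrix.vecMul_vecMul, ih, hx]

theorem exists_pos_of_pow_succ_apply_pos (hP : ∀ i j, 0 ≤ P i j) {m : ℕ} {v i : S}
    (h : 0 < (P ^ (m + 1)) v i) : ∃ w, 0 < P v w ∧ 0 < (P ^ m) w i := by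
  rw [pow_succ', Matrix.mul_apply, sum_pos_iff_of_nonneg fun w _ =>
    mul_nonneg (hP v w) (Matrix.pow_apply_nonneg hP m w i)] at h
  obtain ⟨w, -, hw⟩ := h
  exact ⟨w, (pos_and_pos_or_neg_and_neg_of_mul_pos hw).resolve_right
    fun hneg => (hP v w).not_gt hneg.1⟩

theorem MatIrreducible.exists_apply_pos (hirr : MatIrreducible P) (hP : ∀ i j, 0 ≤ P i j)
    (i : S) : ∃ j, 0 < P i j := by
  obtain ⟨k, hk, hpos⟩ := hirr i i
  obtain ⟨m, rfl⟩ := Nat.exists_eq_add_of_le' hk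
  obtain ⟨w, hw, -⟩ := exists_pos_of_pow_succ_apply_pos hP hpos
  exact ⟨w, hw⟩

theorem MatIrreducible.exists_isArb (hirr : MatIrreducible P) (hP : ∀ i j, 0 ≤ P i j) (r : S) :
    ∃ f, IsArb r f ∧ ∀ j, j ≠ r → 0 < P j (f j) := by
  have hreach : ∀ v, ∃ k, 0 < (P ^ k) v r := fun v =>
    let ⟨k, _, hk⟩ := hirr v r
    ⟨k, hk⟩
  -- `R v` is the distance from `v` to `r` along positive entries.
  let R : S → ℕ := fun v => Nat.find (hreach v)
  have hstep : ∀ v, v ≠ r → ∃ w, 0 < P v w ∧ R w < R v := by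
    intro v hv
    have hRv : 0 < (P ^ R v) v r := Nat.find_spec (hreach v)
    obtain ⟨m, hm⟩ : ∃ m, R v = m + 1 := Nat.exists_eq_succ_of_ne_zero fun h0 => by
      rw [h0, pow_zero, Matrix.one_apply_ne hv] at hRv
      exact hRv.false
    rw [hm] at hRv
    obtain ⟨w, hvw, hw⟩ := exists_pos_of_pow_succ_apply_pos hP hRv
    exact ⟨w, hvw, hm ▸ Nat.lt_succ_of_le (Nat.find_le hw)⟩
  choose g hgP hgR using hstep
  let f : S → S := fun v => if hv : v = r then r else g v hv
  refine ⟨f, ⟨dif_pos rfl, leadsTo_of_lt R fun v hv => ?_⟩, fun v hv => ?_⟩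
  · simpa only [f, dif_neg hv] using hgR v hv
  · simpa only [f, dif_neg hv] using hgP v hv

theorem eq_zero_of_vecMul_eq_self (hirr : MatIrreducible P) (hP : ∀ i j, 0 ≤ P i j)
    {x : S → ℝ} (hx0 : 0 ≤ x) (hx : x ᵥ* P = x) {i : S} (hi : x i = 0) : x = 0 := by
  funext v
  obtain ⟨k, -, hk⟩ := hirr v i
  have hsum : ∑ u, x u * (P ^ k) u i = 0 := by
    rw [← Matrix.vecMul_apply_eq_sum, vecMul_pow_eq_self_s14 hx, hi]
  have hv := (sum_eq_zero_iff_of_nonneg fun u _ =>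
    mul_nonneg (hx0 u) (Matrix.pow_apply_nonneg hP k u i)).mp hsum v (mem_univ v)
  exact (mul_eq_zero.mp hv).resolve_right hk.ne'

theorem eq_smul_of_vecMul_eq_self [Nonempty S] (hirr : MatIrreducible P)
    (hP : ∀ i j, 0 ≤ P i j) {μ x : S → ℝ} (hμ : ∀ i, 0 < μ i) (hμP : μ ᵥ* P = μ)
    (hx : x ᵥ* P = x) : ∃ t : ℝ, x = t • μ := by
  obtain ⟨i, -, hmin⟩ := exists_min_image univ (fun i => x i / μ i) univ_nonempty
  -- Subtract the largest multiple of `μ` lying below `x`.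
  refine ⟨x i / μ i, sub_eq_zero.mp (eq_zero_of_vecMul_eq_self hirr hP (i := i) ?_ ?_ ?_)⟩
  · intro j
    have hj := (le_div_iff₀ (hμ j)).mp (hmin j (mem_univ j))
    simpa [sub_nonneg] using hj
  · rw [Matrix.sub_vecMul, Matrix.smul_vecMul, hx, hμP]
  · simp [div_mul_cancel₀ _ (hμ i).ne']

theorem StationaryDist.eq_div_sum [Nonempty S] {π : S → ℝ} (hπ : StationaryDist P π)
    (hirr : MatIrreducible P) (hP : ∀ i j, 0 ≤ P i j) {μ : S → ℝ} (hμ : ∀ i, 0 < μ i)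
    (hμP : μ ᵥ* P = μ) (i : S) : π i = μ i / ∑ j, μ j := by
  obtain ⟨t, rfl⟩ := eq_smul_of_vecMul_eq_self hirr hP hμ hμP hπ.vecMul_eq_self
  have ht : t * ∑ j, μ j = 1 := by
    rw [mul_sum]
    simpa using hπ.2.1
  rw [eq_div_iff (sum_pos (fun j _ => hμ j) univ_nonempty).ne', Pi.smul_apply, smul_eq_mul,
    mul_right_comm, ht, one_mul]

end Markov

open scoped Matrix in
theorem simpleRandomWalk_vecMul_apply {S : Type*} [Fintype S] [DecidableEq S] {E : Finset (S × S)}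
    {d : S → ℕ} (hd : ∀ i, d i = #(univ.filter fun j => (i, j) ∈ E)) {P : Matrix S S ℝ}
    (hPdef : ∀ i j, P i j = if (i, j) ∈ E then (1 : ℝ) / d i else 0) (w : S → ℝ) (j : S) :
    ((fun i => (d i : ℝ) * w i) ᵥ* P) j = ∑ i ∈ univ.filter (fun i => (i, j) ∈ E), w i := by
  rw [Matrix.vecMul_apply_eq_sum, sum_filter]
  refine sum_congr rfl fun i _ => ?_
  rw [hPdef]
  split_ifs with hij
  · have hdi : (d i : ℝ) ≠ 0 := by
      rw [hd]
      exact_mod_cast (card_pos.mpr ⟨j, mem_filter.mpr ⟨mem_univ j, hij⟩⟩).ne'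
    field_simp
  · rw [mul_zero]

open Classical in
theorem pagerank_simple_random_walk_arborescence_count_general
    {S : Type*} [Fintype S] [DecidableEq S]
    (E : Finset (S × S))
    (d : S → ℕ) (hd : ∀ i, d i = (Finset.univ.filter (fun j => (i, j) ∈ E)).card)
    (P : Matrix S S ℝ)
    (hPdef : ∀ i j, P i j = if (i, j) ∈ E then (1 : ℝ) / d i else 0)
    (hirr : MatIrreducible P)
    (π : S → ℝ) (hπ : StationaryDist P π)
    (N : S → ℕ)
    (hN : ∀ i, N i = (Finset.univ.filter
        (fun f : S → S => IsArb i f ∧ ∀ j ∈ Finset.univ.erase i, (j, f j) ∈ E)).card) :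
    (∀ i : S, ∀ f : S → S, IsArb i f → (∀ j ∈ Finset.univ.erase i, (j, f j) ∈ E) →
        arbWeight P i f = ∏ j ∈ Finset.univ.erase i, (1 : ℝ) / d j) ∧
    ∀ i : S, π i = ((d i : ℝ) * N i) / ∑ j, (d j : ℝ) * N j := by
  have hN' : ∀ i, N i = #(edgeArbs E i) := hN
  have hP0 : ∀ i j, 0 ≤ P i j := fun i j => by
    rw [hPdef]
    split_ifs <;> positivity
  have hPE : ∀ i j, 0 < P i j → (i, j) ∈ E := fun i j h => by
    by_contra hij
    rw [hPdef, if_neg hij] at h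
    exact h.false
  refine ⟨fun i f _ hE => prod_congr rfl fun j hj => by rw [hPdef, if_pos (hE j hj)], fun i => ?_⟩
  have : Nonempty S := ⟨i⟩
  have hd_pos : ∀ i, 0 < d i := fun i => by
    obtain ⟨j, hj⟩ := hirr.exists_apply_pos hP0 i
    rw [hd]
    exact card_pos.mpr ⟨j, mem_filter.mpr ⟨mem_univ j, hPE i j hj⟩⟩
  have hN_pos : ∀ i, 0 < N i := fun i => by
    obtain ⟨f, hf, hfP⟩ := hirr.exists_isArb hP0 i
    rw [hN']
    exact card_pos.mpr ⟨f, mem_edgeArbs.mpr ⟨hf, fun j hj => hPE j _ (hfP j hj)⟩⟩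
  refine hπ.eq_div_sum hirr hP0 (μ := fun i => (d i : ℝ) * N i)
    (fun i => mul_pos (Nat.cast_pos.mpr (hd_pos i)) (Nat.cast_pos.mpr (hN_pos i)))
    (funext fun j => ?_) i
  rw [simpleRandomWalk_vecMul_apply hd hPdef]
  simp only [hN']
  rw [hd j]
  exact_mod_cast sum_card_edgeArbs_eq j

open Classical in
/-- For the simple random walk on a directed graph `(S, E)` where every vertex has
out-degree `d i ≥ 1`: (a) every arborescence rooted at `i` with all edges in `E`
has weight `∏_{j≠i} 1/d j`; (b) the stationary distribution satisfies
`π i = d i · N i / ∑ j, d j · N j` with `N i` the number of arborescences rooted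
at `i` with all edges in `E`. -/
theorem pagerank_simple_random_walk_arborescence_count
    {S : Type*} [Fintype S] [DecidableEq S] [Nonempty S]
    (E : Finset (S × S))
    (d : S → ℕ) (hd : ∀ i, d i = (Finset.univ.filter (fun j => (i, j) ∈ E)).card)
    (hd1 : ∀ i, 1 ≤ d i)
    (P : Matrix S S ℝ)
    (hPdef : ∀ i j, P i j = if (i, j) ∈ E then (1 : ℝ) / d i else 0)
    (hirr : MatIrreducible P)
    (π : S → ℝ) (hπ : StationaryDist P π)
    (N : S → ℕ)
    (hN : ∀ i, N i = (Finset.univ.filter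
        (fun f : S → S => IsArb i f ∧ ∀ j ∈ Finset.univ.erase i, (j, f j) ∈ E)).card) :
    (∀ i : S, ∀ f : S → S, IsArb i f → (∀ j ∈ Finset.univ.erase i, (j, f j) ∈ E) →
        arbWeight P i f = ∏ j ∈ Finset.univ.erase i, (1 : ℝ) / d j) ∧
    ∀ i : S, π i = ((d i : ℝ) * N i) / ∑ j, (d j : ℝ) * N j :=
  pagerank_simple_random_walk_arborescence_count_general E d hd P hPdef hirr π hπ N hN
end
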